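/- arXiv:0812.3537 — 2 statements merged into one kernel-verified Lean document; each statement's English description precedes it below -/
import Mathlib

section
/- Let (Ω, μ) be a probability space, v : Ω → ℝ measurable with 0 ≤ v ≤ R a.e., mean v̄ ∈ (0, R), ζ ∈ (v̄, R), v_E(x) = min(ζ, v(x)) − v̄, v̄_E = ∫ v_E dμ. Then there exists δ₀ > 0 depending only on |E| = ζ − v̄ and v̄ such that for every 0 < δ < δ₀: ‖v − v̄‖_{L¹} ≤ δ + 8(1 + R/δ) ‖v_E − v̄_E‖_{L¹}. -/
open MeasureTheory

/-!
Truncating `v` at `ζ` moves the mean by `m - W = ∫ (v - min ζ v)`, and pointwise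
`|v - m| ≤ (v - min ζ v) + |min ζ v - W| + (m - W)`, so `‖v - m‖₁ ≤ ‖w - W‖₁ + 2 (m - W)` with
`w = min ζ v`. The loss `m - W` is at most `R · μ{v ≥ ζ}`, and on `{v ≥ ζ}` the truncation
`w = ζ = m + c` exceeds its mean `W ≤ m` by at least `c`, so Markov's inequality gives
`c · μ{v ≥ ζ} ≤ ‖w - W‖₁`. Hence `‖v - m‖₁ ≤ (1 + 2R/c) ‖w - W‖₁`, and `δ₀ = c` works.
-/

variable {Ω : Type*} [MeasurableSpace Ω] {μ : Measure Ω}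

lemma integral_abs_sub_integral_le_of_ae_le [IsProbabilityMeasure μ] {f g : Ω → ℝ}
    (hf : Integrable f μ) (hg : Integrable g μ) (hgf : g ≤ᵐ[μ] f) :
    ∫ x, |f x - ∫ y, f y ∂μ| ∂μ ≤
      ∫ x, |g x - ∫ y, g y ∂μ| ∂μ + 2 * ∫ x, (f x - g x) ∂μ := by
  set a := ∫ y, f y ∂μ
  set b := ∫ y, g y ∂μ
  have hgap : ∫ x, (f x - g x) ∂μ = a - b := integral_sub hf hg
  have hab : 0 ≤ a - b := hgap ▸ integral_nonneg_of_ae (hgf.mono fun x hx => sub_nonneg.2 hx)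
  have hpt : ∀ᵐ x ∂μ, |f x - a| ≤ (f x - g x) + |g x - b| + (a - b) := by
    filter_upwards [hgf] with x hx
    calc |f x - a| ≤ |f x - g x| + |g x - b| + |b - a| := by
          linarith [abs_sub_le (f x) (g x) a, abs_sub_le (g x) b a]
      _ = (f x - g x) + |g x - b| + (a - b) := by
        rw [abs_of_nonneg (sub_nonneg.2 hx), abs_sub_comm b, abs_of_nonneg hab]
  have hgap_int : Integrable (fun x => f x - g x) μ := hf.sub hg
  have hdev : Integrable (fun x => |g x - b|) μ := (hg.sub (integrable_const b)).abs
  have hsum : Integrable (fun x => (f x - g x) + |g x - b|) μ := hgap_int.add hdev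
  calc ∫ x, |f x - a| ∂μ
      ≤ ∫ x, ((f x - g x) + |g x - b| + (a - b)) ∂μ :=
        integral_mono_ae (hf.sub (integrable_const a)).abs
          (hsum.add (integrable_const _)) hpt
    _ = ∫ x, |g x - b| ∂μ + 2 * ∫ x, (f x - g x) ∂μ := by
        rw [integral_add hsum (integrable_const _), integral_add hgap_int hdev, integral_const,
          probReal_univ, one_smul, hgap]
        ring

lemma integral_sub_min_le_mul_measureReal [IsFiniteMeasure μ] {f : Ω → ℝ} {ζ R : ℝ}
    (hf_meas : Measurable f) (hf : Integrable f μ) (hfR : ∀ᵐ x ∂μ, f x ≤ R) :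
    ∫ x, (f x - min ζ (f x)) ∂μ ≤ (R - ζ) * μ.real {x | ζ ≤ f x} := by
  have hs : MeasurableSet {x | ζ ≤ f x} := measurableSet_le measurable_const hf_meas
  have hpt : ∀ᵐ x ∂μ, f x - min ζ (f x) ≤ {x | ζ ≤ f x}.indicator (fun _ => R - ζ) x := by
    filter_upwards [hfR] with x hx
    by_cases hxs : ζ ≤ f x
    · simp [Set.indicator_of_mem (show x ∈ {x | ζ ≤ f x} from hxs), min_eq_left hxs, hx]
    · simp [Set.indicator_of_notMem (show x ∉ {x | ζ ≤ f x} from hxs),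
        min_eq_right (not_le.1 hxs).le]
  calc ∫ x, (f x - min ζ (f x)) ∂μ
      ≤ ∫ x, {x | ζ ≤ f x}.indicator (fun _ => R - ζ) x ∂μ :=
        integral_mono_ae (hf.sub ((integrable_const ζ).inf hf))
          ((integrable_const _).indicator hs) hpt
    _ = (R - ζ) * μ.real {x | ζ ≤ f x} := by
        rw [integral_indicator_const _ hs, smul_eq_mul, mul_comm]

lemma mul_measureReal_le_integral_abs_sub [IsFiniteMeasure μ] {g : Ω → ℝ} {s : Set Ω}
    {a c : ℝ} (hc : 0 ≤ c) (hg : Integrable g μ) (hs : ∀ x ∈ s, a + c ≤ g x) :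
    c * μ.real s ≤ ∫ x, |g x - a| ∂μ := by
  have hsub : s ⊆ {x | c ≤ |g x - a|} := fun x hx =>
    (by linarith [hs x hx] : c ≤ g x - a).trans (le_abs_self _)
  calc c * μ.real s ≤ c * μ.real {x | c ≤ |g x - a|} :=
        mul_le_mul_of_nonneg_left (measureReal_mono hsub (measure_ne_top _ _)) hc
    _ ≤ ∫ x, |g x - a| ∂μ :=
        mul_meas_ge_le_integral_of_nonneg (Filter.Eventually.of_forall fun _ => abs_nonneg _)
          (hg.sub (integrable_const a)).abs c

theorem ndloc_general (c m : ℝ) (hc : 0 < c) :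
    ∃ δ₀ > 0, ∀ (Ω : Type) (_ : MeasurableSpace Ω) (μ : Measure Ω)
      (_ : IsProbabilityMeasure μ) (R : ℝ) (v : Ω → ℝ), Measurable v →
      (∀ᵐ x ∂μ, 0 ≤ v x ∧ v x ≤ R) → (∫ x, v x ∂μ) = m →
      ∀ ζ : ℝ, ζ = m + c → ζ < R →
      ∀ δ : ℝ, 0 < δ → δ < δ₀ →
        ∫ x, |v x - m| ∂μ ≤
          δ + 8 * (1 + R / δ) *
            ∫ x, |(min ζ (v x) - m) - ∫ y, (min ζ (v y) - m) ∂μ| ∂μ := by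
  refine ⟨c, hc, fun Ω _ μ _ R v hv hbd hmean ζ hζ hζR δ hδ hδc => ?_⟩
  have hv_int : Integrable v μ :=
    (integrable_const R).mono' hv.aestronglyMeasurable <| hbd.mono fun x hx => by
      rw [Real.norm_eq_abs, abs_of_nonneg hx.1]; exact hx.2
  have hw_int : Integrable (fun x => min ζ (v x)) μ := (integrable_const ζ).inf hv_int
  set W := ∫ x, min ζ (v x) ∂μ
  set B := ∫ x, |min ζ (v x) - W| ∂μ
  set P := μ.real {x | ζ ≤ v x}
  have hm : 0 ≤ m := hmean ▸ integral_nonneg_of_ae (hbd.mono fun x hx => hx.1)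
  have hWm : W ≤ m := hmean ▸ integral_mono hw_int hv_int fun x => min_le_right _ _
  have hcentre : ∫ y, (min ζ (v y) - m) ∂μ = W - m := by
    rw [integral_sub hw_int (integrable_const m), integral_const, probReal_univ, one_smul]
  simp_rw [hcentre, sub_sub_sub_cancel_right]
  have hB : 0 ≤ B := integral_nonneg fun _ => abs_nonneg _
  have hdev : ∫ x, |v x - m| ∂μ ≤ B + 2 * ((R - ζ) * P) := by
    have h := integral_abs_sub_integral_le_of_ae_le hv_int hw_int
      (Filter.Eventually.of_forall fun x => min_le_right ζ (v x))
    have htrunc := integral_sub_min_le_mul_measureReal (ζ := ζ) hv hv_int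
      (hbd.mono fun _ hx => hx.2)
    rw [hmean] at h
    linarith
  have hP : c * P ≤ B := mul_measureReal_le_integral_abs_sub hc.le hw_int fun x hx => by
    rw [min_eq_left (show ζ ≤ v x from hx)]; linarith
  have hloss : (R - ζ) * P ≤ R / δ * B := by
    calc (R - ζ) * P ≤ (R - ζ) * (B / c) :=
          mul_le_mul_of_nonneg_left (by rwa [le_div_iff₀ hc, mul_comm]) (by linarith)
      _ ≤ R * (B / δ) := by gcongr <;> linarith
      _ = R / δ * B := by ring
  have hRB : 0 ≤ R / δ * B := mul_nonneg (div_nonneg (by linarith) hδ.le) hB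
  linarith [show 8 * (1 + R / δ) * B = 8 * B + 8 * (R / δ * B) by ring]

/-- Lemma (ndloc): there is `δ₀ > 0`, depending only on `|E| = ζ - v̄` and `v̄`, such that
for all `0 < δ < δ₀`, `‖v - v̄‖_{L¹} ≤ δ + 8 (1 + R/δ) ‖v_E - v̄_E‖_{L¹}`. -/
theorem ndloc (c m : ℝ) (hc : 0 < c) (hm : 0 < m) :
    ∃ δ₀ > 0, ∀ (Ω : Type) (_ : MeasurableSpace Ω) (μ : Measure Ω)
      (_ : IsProbabilityMeasure μ) (R : ℝ) (v : Ω → ℝ), Measurable v →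
      (∀ᵐ x ∂μ, 0 ≤ v x ∧ v x ≤ R) → (∫ x, v x ∂μ) = m →
      ∀ ζ : ℝ, ζ = m + c → ζ < R →
      ∀ δ : ℝ, 0 < δ → δ < δ₀ →
        ∫ x, |v x - m| ∂μ ≤
          δ + 8 * (1 + R / δ) *
            ∫ x, |(min ζ (v x) - m) - ∫ y, (min ζ (v y) - m) ∂μ| ∂μ :=
  ndloc_general c m hc
end

section
/- Let E ⊂ ℝ be a bounded Borel set and a : E → ℝ^d a bounded measurable map such that for every β ∈ S^{d−1} and every α ∈ ℝ, the Lebesgue measure of {ξ ∈ E : β·a(ξ) = α} is zero. Define ε(γ) = sup over α ∈ ℝ, β ∈ S^{d−1} of |{ξ ∈ E : |β·a(ξ) − α| ≤ γ}|. Then ε(γ) → 0 as γ → 0⁺. -/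
/-!
For a fixed direction `β` and level `α`, the sets `{ξ ∈ E | |β·a(ξ) - α| ≤ γ}` decrease to the
null set `{ξ ∈ E | β·a(ξ) = α}` as `γ ↓ 0`, so their measure tends to `0`. Since `a` is bounded,
`(α, β) ↦ β·a - α` is continuous uniformly on `E`, so `γ` and a whole neighbourhood of `(α, β)`
can be handled at once. Compactness of `[-C-1, C+1] × S^{d-1}`, where `C` bounds `|β·a|` on `E`,
makes the choice of `γ` uniform, and levels with `|α| > C + 1` give empty sets when `γ ≤ 1`.
-/

open MeasureTheory Filter Set Topology

theorem IsCompact.tendstoUniformlyOn_of_continuous {α β E : Type*} [TopologicalSpace α]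
    [TopologicalSpace β] [UniformSpace E] {f : α → β → E} {k : Set β} (hk : IsCompact k)
    (hf : Continuous (Function.uncurry f)) (q : α) : TendstoUniformlyOn f (f q) (𝓝 q) k := by
  intro u hu
  obtain ⟨v, hv, hvu⟩ :=
    hk.mem_uniformity_of_prod hf.continuousOn (mem_univ q) (symm_le_uniformity hu)
  rw [nhdsWithin_univ] at hv
  exact eventually_of_mem hv fun p hp x hx => hvu p hp x hx

theorem isCompact_setOf_sum_sq_eq_one (ι : Type*) [Fintype ι] :
    IsCompact {β : ι → ℝ | ∑ i, β i ^ 2 = 1} := by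
  refine Metric.isCompact_of_isClosed_isBounded (isClosed_eq (by fun_prop) continuous_const)
    ((Metric.isBounded_closedBall (x := 0) (r := 1)).subset fun β hβ => ?_)
  refine mem_closedBall_zero_iff.2 ((pi_norm_le_iff_of_nonneg zero_le_one).2 fun i => ?_)
  rw [Real.norm_eq_abs, ← sq_le_one_iff_abs_le_one, ← hβ]
  exact Finset.single_le_sum (f := fun j => β j ^ 2) (fun j _ => sq_nonneg _) (Finset.mem_univ i)

section SublevelSets

variable {X P : Type*} [MeasurableSpace X] {μ : Measure X} {E : Set X}
  [TopologicalSpace P] {f : P → X → ℝ}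

theorem tendsto_measure_setOf_abs_le_nhdsGT_zero (hE : MeasurableSet E) (hEμ : μ E ≠ ⊤)
    {g : X → ℝ} (hg : Measurable g) :
    Tendsto (fun δ : ℝ => μ {x ∈ E | |g x| ≤ δ}) (𝓝[>] 0) (𝓝 (μ {x ∈ E | g x = 0})) := by
  have hinter : ⋂ δ > (0 : ℝ), {x ∈ E | |g x| ≤ δ} = {x ∈ E | g x = 0} := by
    ext x
    simp only [mem_iInter, mem_ofPred_eq]
    refine ⟨fun h => ⟨(h 1 one_pos).1, abs_eq_zero.1 <| le_antisymm
      (le_of_forall_pos_le_add fun δ hδ => by simpa using (h δ hδ).2) (abs_nonneg _)⟩, ?_⟩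
    rintro ⟨hx, hgx⟩ δ hδ
    exact ⟨hx, by simpa [hgx] using hδ.le⟩
  rw [← hinter]
  exact tendsto_measure_biInter_gt
    (fun δ _ => (hE.inter (measurableSet_le hg.abs measurable_const)).nullMeasurableSet)
    (fun δ δ' _ hδδ' x hx => ⟨hx.1, hx.2.trans hδδ'⟩)
    ⟨1, one_pos, ne_top_of_le_ne_top hEμ (measure_mono fun x hx => hx.1)⟩

theorem eventually_measure_setOf_abs_le_le (hE : MeasurableSet E) (hEμ : μ E ≠ ⊤) {p : P}
    (hfm : Measurable (f p)) (hf0 : μ {x ∈ E | f p x = 0} = 0)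
    (hf : TendstoUniformlyOn f (f p) (𝓝 p) E) {ε : ENNReal} (hε : 0 < ε) :
    ∀ᶠ z : ℝ × P in 𝓝 (0, p), μ {x ∈ E | |f z.2 x| ≤ z.1} ≤ ε := by
  have hsmall := ENNReal.tendsto_nhds_zero.1
    (hf0 ▸ tendsto_measure_setOf_abs_le_nhdsGT_zero hE hEμ hfm) ε hε
  obtain ⟨δ, hδε, hδ⟩ := (hsmall.and self_mem_nhdsWithin).exists
  have hnear : ∀ᶠ q in 𝓝 p, ∀ x ∈ E, dist (f p x) (f q x) < δ / 2 :=
    Metric.tendstoUniformlyOn_iff.1 hf _ (half_pos hδ)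
  have hγ : ∀ᶠ γ : ℝ in 𝓝 0, |γ| < δ / 2 := by
    simpa using (continuous_abs.tendsto (0 : ℝ)).eventually
      (eventually_lt_nhds (by simpa using half_pos hδ))
  rw [nhds_prod_eq]
  filter_upwards [hγ.prod_mk hnear] with z ⟨hγ, hq⟩
  refine le_trans (measure_mono ?_) hδε
  rintro x ⟨hxE, hx⟩
  refine ⟨hxE, ?_⟩
  have hdist := hq x hxE
  rw [Real.dist_eq] at hdist
  linarith [le_abs_self z.1, abs_sub_abs_le_abs_sub (f p x) (f z.2 x)]

theorem IsCompact.tendsto_iSup_measure_setOf_abs_le_nhds_zero (hE : MeasurableSet E)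
    (hEμ : μ E ≠ ⊤) {K : Set P} (hK : IsCompact K) (hfm : ∀ p ∈ K, Measurable (f p))
    (hf0 : ∀ p ∈ K, μ {x ∈ E | f p x = 0} = 0)
    (hf : ∀ p ∈ K, TendstoUniformlyOn f (f p) (𝓝 p) E) :
    Tendsto (fun γ : ℝ => ⨆ p ∈ K, μ {x ∈ E | |f p x| ≤ γ}) (𝓝 0) (𝓝 0) := by
  refine ENNReal.tendsto_nhds_zero.2 fun ε hε => ?_
  filter_upwards [hK.eventually_forall_of_forall_eventually
    (P := fun γ p => μ {x ∈ E | |f p x| ≤ γ} ≤ ε) fun p hp =>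
    eventually_measure_setOf_abs_le_le hE hEμ (hfm p hp) (hf0 p hp) (hf p hp) hε] with γ hγ
  exact iSup₂_le hγ

end SublevelSets

theorem sublevel_sets_uniformly_small (d : ℕ) (E : Set ℝ) (hE : MeasurableSet E)
    (hEbdd : Bornology.IsBounded E) (a : ℝ → (Fin d → ℝ)) (ha : Measurable a)
    (M : ℝ) (haM : ∀ ξ ∈ E, ∀ i, |a ξ i| ≤ M)
    (hnd : ∀ β : Fin d → ℝ, (∑ i, β i ^ 2) = 1 → ∀ α : ℝ,
      volume {ξ ∈ E | (∑ i, β i * a ξ i) = α} = 0) :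
    Tendsto
      (fun γ : ℝ => ⨆ (α : ℝ) (β : Fin d → ℝ) (_ : (∑ i, β i ^ 2) = 1),
        volume {ξ ∈ E | |(∑ i, β i * a ξ i) - α| ≤ γ})
      (nhdsWithin 0 (Set.Ioi 0)) (nhds 0) := by
  set S := {β : Fin d → ℝ | ∑ i, β i ^ 2 = 1}
  set B := univ.pi fun _ : Fin d => Icc (-M) M
  have haB : ∀ ξ ∈ E, a ξ ∈ B := fun ξ hξ i _ => abs_le.1 (haM ξ hξ i)
  have hB : IsCompact B := isCompact_univ_pi fun _ => isCompact_Icc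
  obtain ⟨C, hC⟩ := ((isCompact_setOf_sum_sq_eq_one (Fin d)).prod hB).exists_bound_of_continuousOn
    (f := fun z => ∑ i, z.1 i * z.2 i) (by fun_prop)
  set f : ℝ × (Fin d → ℝ) → ℝ → ℝ := fun p ξ => ∑ i, p.2 i * a ξ i - p.1
  have hK : IsCompact (Icc (-(C + 1)) (C + 1) ×ˢ S) :=
    isCompact_Icc.prod (isCompact_setOf_sum_sq_eq_one (Fin d))
  have hf : ∀ p, TendstoUniformlyOn f (f p) (𝓝 p) E := fun p =>
    ((hB.tendstoUniformlyOn_of_continuous (f := fun (p : ℝ × (Fin d → ℝ)) (v : Fin d → ℝ) =>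
      ∑ i, p.2 i * v i - p.1) (by fun_prop) p).comp a).mono haB
  have hlim := hK.tendsto_iSup_measure_setOf_abs_le_nhds_zero hE hEbdd.measure_lt_top.ne
    (fun p _ => by fun_prop) (fun p hp => by simpa only [f, sub_eq_zero] using hnd p.2 hp.2 p.1)
    (fun p _ => hf p)
  refine tendsto_of_tendsto_of_tendsto_of_le_of_le' tendsto_const_nhds
    (hlim.mono_left nhdsWithin_le_nhds) (.of_forall fun _ => bot_le) ?_
  filter_upwards [eventually_nhdsWithin_of_eventually_nhds (eventually_le_nhds zero_lt_one)]
    with γ hγ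
  refine iSup_le fun α => iSup_le fun β => iSup_le fun hβ => ?_
  by_cases hα : |α| ≤ C + 1
  · exact le_iSup₂_of_le (f := fun p _ => volume {ξ ∈ E | |f p ξ| ≤ γ}) (α, β)
      ⟨abs_le.1 hα, hβ⟩ le_rfl
  · have hempty : {ξ ∈ E | |∑ i, β i * a ξ i - α| ≤ γ} = ∅ := by
      refine eq_empty_of_forall_notMem fun ξ ⟨hξ, hle⟩ => hα ?_
      have hbd := hC (β, a ξ) ⟨hβ, haB ξ hξ⟩
      rw [Real.norm_eq_abs] at hbd
      rw [abs_le] at hbd hle ⊢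
      constructor <;> linarith
    simp [hempty]
end
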